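/- Downward simulation: For a PIIS T and k ≤ n, the relation ∼ = {(g, g') ∈ G^n × G^k | g_{[k]} = g'} is a [k]-stuttering simulation between T(n) and T(k); hence T(n) ≤_{[k]ss} T(k). -/
import Mathlib


-- State and path formulas of ACTL*K without next, in negation normal form,
-- with atoms and epistemic modalities indexed by agents in `A`.
mutual
inductive SForm (AP A : Type) : Type where
  | atom : AP → A → SForm AP A
  | natom : AP → A → SForm AP A
  | sand : SForm AP A → SForm AP A → SForm AP A
  | sor : SForm AP A → SForm AP A → SForm AP A
  | know : A → SForm AP A → SForm AP A
  | aall : PForm AP A → SForm AP A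

inductive PForm (AP A : Type) : Type where
  | ofState : SForm AP A → PForm AP A
  | pand : PForm AP A → PForm AP A → PForm AP A
  | por : PForm AP A → PForm AP A → PForm AP A
  | puntil : PForm AP A → PForm AP A → PForm AP A
  | prelease : PForm AP A → PForm AP A → PForm AP A
end

-- Renaming of agent indices in a formula.
mutual
def renameS {AP A B : Type} (f : A → B) : SForm AP A → SForm AP B
  | .atom p i => .atom p (f i)
  | .natom p i => .natom p (f i)
  | .sand φ ψ => .sand (renameS f φ) (renameS f ψ)
  | .sor φ ψ => .sor (renameS f φ) (renameS f ψ)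
  | .know i φ => .know (f i) (renameS f φ)
  | .aall φ => .aall (renameP f φ)

def renameP {AP A B : Type} (f : A → B) : PForm AP A → PForm AP B
  | .ofState φ => .ofState (renameS f φ)
  | .pand φ ψ => .pand (renameP f φ) (renameP f ψ)
  | .por φ ψ => .por (renameP f φ) (renameP f ψ)
  | .puntil φ ψ => .puntil (renameP f φ) (renameP f ψ)
  | .prelease φ ψ => .prelease (renameP f φ) (renameP f ψ)
end

/-- A model: global states, a transition relation, an initial state,
epistemic indistinguishability relations, and an indexed valuation. -/
structure Model (AP A : Type) where
  G : Type
  R : G → G → Prop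
  init : G
  eqv : A → G → G → Prop
  val : G → AP → A → Prop

def Model.ValidPath {AP A : Type} (M : Model AP A) (π : ℕ → M.G) : Prop :=
  ∀ j, M.R (π j) (π (j + 1))

def shiftPath {G : Type} (π : ℕ → G) (i : ℕ) : ℕ → G := fun j => π (i + j)

-- Satisfaction of state formulas at states and of path formulas on paths.
mutual
def ssat {AP A : Type} (M : Model AP A) : SForm AP A → M.G → Prop
  | .atom p i, g => M.val g p i
  | .natom p i, g => ¬ M.val g p i
  | .sand φ ψ, g => ssat M φ g ∧ ssat M ψ g
  | .sor φ ψ, g => ssat M φ g ∨ ssat M ψ g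
  | .know i φ, g => ∀ g', M.eqv i g g' → ssat M φ g'
  | .aall φ, g => ∀ π, M.ValidPath π → π 0 = g → psat M φ π

def psat {AP A : Type} (M : Model AP A) : PForm AP A → (ℕ → M.G) → Prop
  | .ofState φ, π => ssat M φ (π 0)
  | .pand φ ψ, π => psat M φ π ∧ psat M ψ π
  | .por φ ψ, π => psat M φ π ∨ psat M ψ π
  | .puntil φ ψ, π => ∃ i, psat M ψ (shiftPath π i) ∧ ∀ j < i, psat M φ (shiftPath π j)
  | .prelease φ ψ, π => ∀ i, (∀ j < i, ¬ psat M φ (shiftPath π j)) → psat M ψ (shiftPath π i)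
end

/-- A template agent: template states, initial state, synchronous and
asynchronous template actions (the silent action is treated separately),
protocol, deterministic evolution function, and labeling. -/
structure Template (AP : Type) where
  L : Type
  init : L
  SAct : Type
  AAct : Type
  protS : L → SAct → Prop
  protA : L → AAct → Prop
  tS : L → SAct → L
  tA : L → AAct → L
  lab : L → AP → Prop

/-- Global states of the instance `T(n)`: a template state per agent. -/
def GState {AP : Type} (T : Template AP) (n : ℕ) : Type := Fin n → T.L

/-- Concrete actions of `T(n)`: synchronous actions (shared by all agents),
asynchronous actions indexed by the unique agent performing them, and the
(joint) silent action. -/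
inductive CAct {AP : Type} (T : Template AP) (n : ℕ) : Type where
  | sync : T.SAct → CAct T n
  | async : T.AAct → Fin n → CAct T n
  | eps : CAct T n

/-- The global interleaved transition relation of `T(n)`: a synchronous
action is performed by all agents simultaneously, an asynchronous action by
exactly one agent (all others keep their state), and the silent action
leaves the global state unchanged. -/
def GTrans {AP : Type} (T : Template AP) (n : ℕ) :
    CAct T n → GState T n → GState T n → Prop
  | .sync s, g, g' => ∀ i, T.protS (g i) s ∧ g' i = T.tS (g i) s
  | .async b i, g, g' =>
      T.protA (g i) b ∧ g' i = T.tA (g i) b ∧ ∀ j, j ≠ i → g' j = g j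
  | .eps, g, g' => g' = g

/-- The initial global state of `T(n)`. -/
def GInit {AP : Type} (T : Template AP) (n : ℕ) : GState T n := fun _ => T.init

/-- Reachability from the initial state of `T(n)`. -/
def GReach {AP : Type} (T : Template AP) (n : ℕ) (g : GState T n) : Prop :=
  Relation.ReflTransGen (fun x y => ∃ a, GTrans T n a x y) (GInit T n) g

/-- The instance `T(n)` as a model: epistemic relations are given by equality
of the local component over the (reachable) global states, and atoms `p_i`
hold according to the template labeling of agent `i`'s local state. -/
def PIISModel {AP : Type} (T : Template AP) (n : ℕ) : Model AP (Fin n) where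
  G := GState T n
  R := fun g g' => ∃ a, GTrans T n a g g'
  init := GInit T n
  eqv := fun i g g' => GReach T n g' ∧ g i = g' i
  val := fun g p i => T.lab (g i) p

/-- `T(n) ⊨ φ`: satisfaction at the initial state. -/
def PIISsat {AP : Type} (T : Template AP) (n : ℕ) (φ : SForm AP (Fin n)) : Prop :=
  ssat (PIISModel T n) φ (PIISModel T n).init

/-- The instance `T(n)` viewed as a model whose epistemic relations and
valuation are restricted to the agents `1,…,k` (via the canonical inclusion
`Fin k ↪ Fin n`). -/
def PIISModelR {AP : Type} (T : Template AP) (n k : ℕ) (h : k ≤ n) :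
    Model AP (Fin k) where
  G := GState T n
  R := fun g g' => ∃ a, GTrans T n a g g'
  init := GInit T n
  eqv := fun i g g' => GReach T n g' ∧ g (Fin.castLE h i) = g' (Fin.castLE h i)
  val := fun g p i => T.lab (g (Fin.castLE h i)) p

/-- `J`-stuttering simulation between two models over the same agent index
set: initial states are related; related states have matching epistemic
successors for agents in `J` and agree on atoms indexed by `J`; and every
path of the first model is matched by a path of the second together with
partitions into finite nonempty blocks (given by the strictly monotone block
boundary functions `b`, `b'` starting at `0`) such that all states of
corresponding blocks are related. -/
def StutterSim {AP A : Type} (J : Set A) (M M' : Model AP A)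
    (sim : M.G → M'.G → Prop) : Prop :=
  sim M.init M'.init ∧
  ∀ g g', sim g g' →
    ((∀ i ∈ J, ∀ g1, M.eqv i g g1 → ∃ g1', M'.eqv i g' g1' ∧ sim g1 g1') ∧
     (∀ p, ∀ i ∈ J, (M.val g p i ↔ M'.val g' p i)) ∧
     (∀ π, M.ValidPath π → π 0 = g →
        ∃ π', M'.ValidPath π' ∧ π' 0 = g' ∧
          ∃ b b' : ℕ → ℕ, b 0 = 0 ∧ b' 0 = 0 ∧ StrictMono b ∧ StrictMono b' ∧
            ∀ j m m', b j ≤ m → m < b (j + 1) → b' j ≤ m' → m' < b' (j + 1) →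
              sim (π m) (π' m')))

def restrictG {AP : Type} (T : Template AP) {n k : ℕ} (h : k ≤ n)
    (g : GState T n) : GState T k := fun i => g (Fin.castLE h i)

lemma trans_restrict {AP : Type} (T : Template AP) {n k : ℕ} (h : k ≤ n)
    {g g' : GState T n} (a : CAct T n) (ht : GTrans T n a g g') :
    ∃ a', GTrans T k a' (restrictG T h g) (restrictG T h g') := by
  cases a with
  | sync s => exact ⟨.sync s, fun i => ht (Fin.castLE h i)⟩
  | async b i =>
    obtain ⟨h1, h2, h3⟩ := ht
    by_cases hk : (i : ℕ) < k
    · refine ⟨.async b ⟨i, hk⟩, ?_, ?_, ?_⟩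
      · have : Fin.castLE h ⟨(i : ℕ), hk⟩ = i := Fin.ext rfl
        simpa [restrictG, this] using h1
      · have : Fin.castLE h ⟨(i : ℕ), hk⟩ = i := Fin.ext rfl
        simpa [restrictG, this] using h2
      · intro j hj
        apply h3
        intro hc
        apply hj
        apply Fin.ext
        simpa using congrArg Fin.val hc
    · refine ⟨.eps, ?_⟩
      funext j
      apply h3
      intro hc
      have hv : (j : ℕ) = (i : ℕ) := congrArg Fin.val hc
      exact hk (hv ▸ j.isLt)
  | eps =>
    have hg : g' = g := ht
    exact ⟨.eps, show restrictG T h g' = restrictG T h g by rw [hg]⟩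

lemma reach_restrict {AP : Type} (T : Template AP) {n k : ℕ} (h : k ≤ n)
    {g : GState T n} (hg : GReach T n g) : GReach T k (restrictG T h g) := by
  induction hg with
  | refl => exact Relation.ReflTransGen.refl
  | tail _ hstep ih =>
    obtain ⟨a, ha⟩ := hstep
    exact ih.tail (trans_restrict T h a ha)

/-- Downward simulation: for `k ≤ n`, the relation relating a global state
`g` of `T(n)` with its restriction `g_{[k]}` to the agents `1,…,k` is a
`[k]`-stuttering simulation between `T(n)` and `T(k)`;
hence `T(n) ≤_{[k]ss} T(k)`. -/
theorem downward_simulation {AP : Type} (T : Template AP) (n k : ℕ)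
    (h : k ≤ n) :
    StutterSim (Set.univ : Set (Fin k)) (PIISModelR T n k h) (PIISModel T k)
      (fun g g' => ∀ i : Fin k, g (Fin.castLE h i) = g' i) := by
  constructor
  · intro i; rfl
  · intro g g' hsim
    have hgg' : restrictG T h g = g' := funext hsim
    refine ⟨?_, ?_, ?_⟩
    · intro i _ g1 ⟨hr, he⟩
      refine ⟨restrictG T h g1, ⟨reach_restrict T h hr, ?_⟩, fun j => rfl⟩
      rw [← hsim i]; exact he
    · intro p i _
      simp [PIISModel, PIISModelR, hsim i]
    · intro π hπ hπ0
      refine ⟨fun j => restrictG T h (π j), ?_, ?_, id, id, rfl, rfl,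
        strictMono_id, strictMono_id, ?_⟩
      · intro j
        obtain ⟨a, ha⟩ := hπ j
        exact trans_restrict T h a ha
      · show restrictG T h (π 0) = g'
        rw [hπ0, hgg']
      · intro j m m' h1 h2 h3 h4 i
        simp only [id_eq] at h1 h2 h3 h4
        have hm : m = j := by omega
        have hm' : m' = j := by omega
        subst hm hm'
        rfl
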